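/- The entropies of the stationary representations of the absorbed and killed chains satisfy h(𝕐^{(𝒜)}) = h(𝕐^{(𝒦)}) + ∑_{i∈I} μ(i) P(i,ℰ) H(D^i), where H(D^i) = -∑_{δ∈ℰ} (P(i,δ)/P(i,ℰ)) log(P(i,δ)/P(i,ℰ)) (with the convention that the term vanishes when P(i,ℰ)=0). -/

import Mathlib

open Finset Matrix Real

/-!
Both kernels move from an edge `(i, j)` to an edge `(j, k)` with probabilities that depend on
`j` alone, so each entropy is the `μ`-average over `j` of the entropy of the row leaving `j`:
quasi-stationarity (`μ P_I = γ μ`, hence killed mass `1 - γ`) makes `μ` the law of the current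
state `j` under both `ζ` and `η`. Row by row, the absorbed chain only splits each killed transition
of mass `P(j, ℰ) μ(k)` into the pieces `P(j, δ) μ(k)`, which adds `μ(k) P(j, ℰ) H(Dʲ)` to the
entropy by the grouping property of entropy; summing over `k` uses `∑ μ = 1`.
-/

lemma mul_negMulLog_div {p s : ℝ} (hs : s ≠ 0) :
    s * negMulLog (p / s) = negMulLog p + p * log s := by
  rw [div_eq_mul_inv, negMulLog_mul]
  simp only [negMulLog, log_inv]
  field_simp

lemma sum_mul_sum_negMulLog_div {E : Type*} [Fintype E] {p : E → ℝ} (hp : ∀ δ, 0 ≤ p δ) :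
    (∑ ε, p ε) * ∑ δ, negMulLog (p δ / ∑ ε, p ε)
      = ∑ δ, negMulLog (p δ) - negMulLog (∑ ε, p ε) := by
  rcases eq_or_ne (∑ ε, p ε) 0 with hs | hs
  · have hp0 : ∀ δ, p δ = 0 := fun δ ↦
      (sum_eq_zero_iff_of_nonneg fun i _ ↦ hp i).mp hs δ (mem_univ δ)
    simp [hp0]
  · rw [mul_sum]
    simp_rw [mul_negMulLog_div hs]
    rw [sum_add_distrib, ← sum_mul, negMulLog]
    ring

lemma sum_negMulLog_mul_const {E : Type*} [Fintype E] (p : E → ℝ) (c : ℝ) :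
    ∑ ε, negMulLog (p ε * c)
      = negMulLog ((∑ ε, p ε) * c) + c * (∑ ε, negMulLog (p ε) - negMulLog (∑ ε, p ε)) := by
  simp only [negMulLog_mul, sum_add_distrib, ← sum_mul, ← mul_sum]
  ring

section QuasiStationary

variable {I : Type*} [Fintype I] {Q : Matrix I I ℝ} {s μ : I → ℝ} {γ : ℝ}

lemma dotProduct_killing_eq_one_sub (hs : ∀ i, ∑ j, Q i j + s i = 1) (hμ1 : ∑ i, μ i = 1)
    (hqsd : μ ᵥ* Q = γ • μ) : μ ⬝ᵥ s = 1 - γ := by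
  have hs' : s = 1 - Q *ᵥ 1 := funext fun i ↦ by
    simp only [Pi.sub_apply, Pi.one_apply, mulVec, dotProduct, mul_one]
    linarith [hs i]
  rw [hs', dotProduct_sub, dotProduct_mulVec, hqsd, smul_dotProduct, dotProduct_one,
    hμ1, smul_eq_mul, mul_one]

lemma vecMul_add_dotProduct_smul_self (hs : ∀ i, ∑ j, Q i j + s i = 1) (hμ1 : ∑ i, μ i = 1)
    (hqsd : μ ᵥ* Q = γ • μ) : μ ᵥ* Q + (μ ⬝ᵥ s) • μ = μ := by
  rw [dotProduct_killing_eq_one_sub hs hμ1 hqsd, hqsd, ← add_smul, add_sub_cancel, one_smul]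

end QuasiStationary

lemma sum_mul_sum_negMulLog_of_eq_ite {I β : Type*} [Fintype I] [DecidableEq I] [Fintype β]
    (w : I × I × β → ℝ) (K : I × I × β → I × I × β → ℝ) (R : I → I × β → ℝ)
    (hK : ∀ i j l k a b, K (i, j, a) (l, k, b) = if l = j then R j (k, b) else 0) :
    ∑ x, w x * ∑ y, negMulLog (K x y)
      = ∑ j, (∑ i, ∑ a, w (i, j, a)) * ∑ y, negMulLog (R j y) := by
  have hrow : ∀ i j a, ∑ y, negMulLog (K (i, j, a) y) = ∑ y, negMulLog (R j y) := by
    intro i j a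
    simp [Fintype.sum_prod_type, hK, apply_ite negMulLog]
  simp only [Fintype.sum_prod_type, hrow, sum_mul]
  exact sum_comm

theorem absorbed_killed_entropy_difference {I E : Type*} [Fintype I] [Fintype E]
    [DecidableEq I]
    (P : Matrix (I ⊕ E) (I ⊕ E) ℝ)
    (hP0 : ∀ a b, 0 ≤ P a b)
    (hP1 : ∀ a, ∑ b, P a b = 1)
    (μ : I → ℝ) (hμ1 : ∑ i, μ i = 1)
    (γ : ℝ)
    (hqsd : μ ᵥ* (P.submatrix Sum.inl Sum.inl) = γ • μ)
    (K : I × I × Bool → I × I × Bool → ℝ)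
    (hK : ∀ (i j l k : I) (a b : Bool),
      K (i, j, a) (l, k, b)
        = if l = j then
            (if b then P (Sum.inl j) (Sum.inl k)
             else (∑ ε : E, P (Sum.inl j) (Sum.inr ε)) * μ k)
          else 0)
    (ζ : I × I × Bool → ℝ)
    (hζ : ∀ (i j : I) (a : Bool),
      ζ (i, j, a)
        = if a then μ i * P (Sum.inl i) (Sum.inl j)
          else μ i * (∑ ε : E, P (Sum.inl i) (Sum.inr ε)) * μ j)
    (A : I × I × Option E → I × I × Option E → ℝ)
    (hA : ∀ (i j l k : I) (d e : Option E),
      A (i, j, d) (l, k, e)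
        = if l = j then
            (match e with
              | none => P (Sum.inl j) (Sum.inl k)
              | some ε => P (Sum.inl j) (Sum.inr ε) * μ k)
          else 0)
    (η : I × I × Option E → ℝ)
    (hη : ∀ (i j : I) (d : Option E),
      η (i, j, d)
        = match d with
          | none => μ i * P (Sum.inl i) (Sum.inl j)
          | some δ => μ i * P (Sum.inl i) (Sum.inr δ) * μ j) :
    (∑ x : I × I × Option E, η x * ∑ y : I × I × Option E, negMulLog (A x y))
      = (∑ x : I × I × Bool, ζ x * ∑ y : I × I × Bool, negMulLog (K x y))
        + ∑ i : I, μ i * (∑ ε : E, P (Sum.inl i) (Sum.inr ε))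
            * ∑ δ : E, negMulLog
                (P (Sum.inl i) (Sum.inr δ) / ∑ ε : E, P (Sum.inl i) (Sum.inr ε)) := by
  have hstat : ∀ j, ∑ i, (μ i * P (Sum.inl i) (Sum.inl j)
      + μ i * (∑ ε, P (Sum.inl i) (Sum.inr ε)) * μ j) = μ j := by
    have hrow : ∀ i, ∑ j, P.submatrix Sum.inl Sum.inl i j + ∑ ε, P (Sum.inl i) (Sum.inr ε) = 1 :=
      fun i ↦ by simpa [Fintype.sum_sum_type] using hP1 (Sum.inl i)
    intro j
    simpa [vecMul, dotProduct, sum_add_distrib, sum_mul] using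
      congrFun (vecMul_add_dotProduct_smul_self hrow hμ1 hqsd) j
  have hmargη : ∀ j, ∑ i, ∑ d, η (i, j, d) = μ j := fun j ↦ by
    simpa [Fintype.sum_option, hη, ← mul_sum, ← sum_mul] using hstat j
  have hmargζ : ∀ j, ∑ i, ∑ a, ζ (i, j, a) = μ j := fun j ↦ by
    simpa [Fintype.sum_bool, hζ] using hstat j
  rw [sum_mul_sum_negMulLog_of_eq_ite η A (fun j y ↦ match y.2 with
      | none => P (Sum.inl j) (Sum.inl y.1)
      | some ε => P (Sum.inl j) (Sum.inr ε) * μ y.1) hA,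
    sum_mul_sum_negMulLog_of_eq_ite ζ K (fun j y ↦ if y.2 then P (Sum.inl j) (Sum.inl y.1)
      else (∑ ε, P (Sum.inl j) (Sum.inr ε)) * μ y.1) hK, ← sum_add_distrib]
  refine sum_congr rfl fun j _ ↦ ?_
  rw [hmargη j, hmargζ j, mul_assoc, ← mul_add, sum_mul_sum_negMulLog_div fun δ ↦ hP0 _ _]
  congr 1
  simp only [Fintype.sum_prod_type, Fintype.sum_option, Fintype.sum_bool, if_true,
    Bool.false_eq_true, if_false, sum_negMulLog_mul_const, sum_add_distrib, ← sum_mul, hμ1, one_mul]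
  ring
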